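/- arXiv:2404.08400 — 3 statements merged into one kernel-verified Lean document; each statement's English description precedes it below -/
import Mathlib

section
/- Let T be a tree of order m with diameter d ≥ 2, let ε = ε(T), and let K_n be the complete graph on n ≥ 2 vertices. Then rn(T □ K_n) ≥ (mn − 1)(d + ε) − 2nL(T). -/
open SimpleGraph Finset

namespace RadioPaper

/-- A radio labelling of `G`: `|f u - f v| ≥ diam G + 1 - d(u,v)` for all distinct `u v`. -/
def IsRadioLabelling {α : Type*} [Fintype α] (G : SimpleGraph α) (f : α → ℕ) : Prop :=
  ∀ u v : α, u ≠ v → G.diam + 1 ≤ Nat.dist (f u) (f v) + G.dist u v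

/-- The span of a labelling: the maximum difference between two labels. -/
noncomputable def spanOf {α : Type*} [Fintype α] (f : α → ℕ) : ℕ :=
  Finset.univ.sup fun p : α × α => Nat.dist (f p.1) (f p.2)

/-- The radio number of `G`: the minimum span of a radio labelling of `G`. -/
noncomputable def radioNumber {α : Type*} [Fintype α] (G : SimpleGraph α) : ℕ :=
  sInf { k | ∃ f : α → ℕ, IsRadioLabelling G f ∧ spanOf f = k }

variable {V : Type*} [Fintype V]

/-- The weight of `G` from `v`. -/
noncomputable def weight (G : SimpleGraph V) (v : V) : ℕ := ∑ u, G.dist u v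

/-- The set of weight centers: vertices minimizing the weight. -/
def weightCenters (G : SimpleGraph V) : Set V := {v | ∀ u, weight G v ≤ weight G u}

/-- The level of a vertex: its distance to the nearest weight center. -/
noncomputable def level (G : SimpleGraph V) (u : V) : ℕ :=
  sInf ((fun x => G.dist u x) '' weightCenters G)

/-- The total level of `G`. -/
noncomputable def totalLevel (G : SimpleGraph V) : ℕ := ∑ u, level G u

/-- `ε(G) = 1` if `G` has a unique weight center, `0` otherwise. -/
noncomputable def epsilon (G : SimpleGraph V) : ℕ :=
  if (weightCenters G).ncard = 1 then 1 else 0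

/-- `x` lies on a shortest (= unique, in a tree) path from `a` to `b`. -/
def onPath (G : SimpleGraph V) (a x b : V) : Prop :=
  G.dist a x + G.dist x b = G.dist a b

/-- `x` is a common ancestor of `u` and `v` (tree rooted at its weight centers). -/
def IsCommonAncestor (G : SimpleGraph V) (x u v : V) : Prop :=
  (∃ w ∈ weightCenters G, onPath G w x u) ∧ ∃ w ∈ weightCenters G, onPath G w x v

/-- `φ(u,v)`: the maximum level of a common ancestor of `u` and `v`. -/
noncomputable def phi (G : SimpleGraph V) (u v : V) : ℕ :=
  sSup (level G '' {x | IsCommonAncestor G x u v})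

open scoped Classical in
/-- `δ(u,v) = 1` iff `G` has two weight centers and the `(u,v)`-path contains both. -/
noncomputable def delta (G : SimpleGraph V) (u v : V) : ℕ :=
  if (weightCenters G).ncard = 2 ∧ ∀ x ∈ weightCenters G, onPath G u x v then 1 else 0

/-- `u` and `v` are in different branches: their path contains exactly one weight center. -/
def InDifferentBranches (G : SimpleGraph V) (u v : V) : Prop :=
  {x ∈ weightCenters G | onPath G u x v}.ncard = 1

/-- `u` and `v` are in opposite branches: the tree has two weight centers and the
`(u,v)`-path contains both. -/
def InOppositeBranches (G : SimpleGraph V) (u v : V) : Prop :=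
  (weightCenters G).ncard = 2 ∧ ∀ x ∈ weightCenters G, onPath G u x v

/-- `u` and `v` are in the same branch: their path contains no weight center. -/
def InSameBranch (G : SimpleGraph V) (u v : V) : Prop :=
  ∀ x ∈ weightCenters G, ¬ onPath G u x v


/-!
Sort the vertices of `T □ K_n` by label. Two consecutive vertices `u, v` of this order are
distinct, and in `T □ K_n` (whose diameter is at least `diam T + 1`) the radio condition forces
their labels to differ by at least `diam T + 1 - d_T(u, v)`. In a tree, two distinct weight
centers are adjacent, since the weight is strictly convex along paths; hence
`d_T(u, v) ≤ L(u) + L(v) + 1 - ε`. Summing over the `mn - 1` consecutive pairs, every vertex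
contributes its level at most twice, which gives the bound.
-/

section Span

variable {α : Type*} [Fintype α]

lemma dist_le_spanOf (f : α → ℕ) (u v : α) : Nat.dist (f u) (f v) ≤ spanOf f :=
  Finset.le_sup (f := fun p : α × α => Nat.dist (f p.1) (f p.2)) (mem_univ (u, v))

lemma exists_equiv_fin_monotone {β : Type*} [LinearOrder β] (f : α → β) {N : ℕ}
    (hN : Fintype.card α = N) : ∃ y : Fin N ≃ α, Monotone (f ∘ y) := by
  let e := Fintype.equivFinOfCardEq hN
  exact ⟨(Tuple.sort (f ∘ e.symm)).trans e.symm, Tuple.monotone_sort (f ∘ e.symm)⟩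

theorem le_spanOf_of_le_dist (f : α → ℕ) (D : ℕ) (ℓ : α → ℕ)
    (h : ∀ u v, u ≠ v → D ≤ Nat.dist (f u) (f v) + ℓ u + ℓ v) :
    ((Fintype.card α : ℤ) - 1) * D - 2 * ∑ u, (ℓ u : ℤ) ≤ spanOf f := by
  have hℓ : 0 ≤ ∑ u, (ℓ u : ℤ) := by positivity
  obtain hk | ⟨k, hk⟩ : Fintype.card α = 0 ∨ ∃ k, Fintype.card α = k + 1 :=
    (Nat.eq_zero_or_eq_succ_pred _).imp_right fun h => ⟨_, h⟩
  · rw [hk]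
    push_cast
    linarith [(spanOf f).cast_nonneg (α := ℤ), D.cast_nonneg (α := ℤ)]
  obtain ⟨y, hy⟩ := exists_equiv_fin_monotone f hk
  set g : Fin (k + 1) → ℤ := fun i => f (y i)
  set l : Fin (k + 1) → ℤ := fun i => ℓ (y i)
  have hgap : ∀ i : Fin k, (D : ℤ) ≤ g i.succ - g i.castSucc + l i.castSucc + l i.succ := by
    intro i
    have hle : f (y i.castSucc) ≤ f (y i.succ) := hy (Fin.castSucc_le_succ i)
    have := h _ _ (y.injective.ne (Fin.castSucc_lt_succ (i := i)).ne')
    rw [Nat.dist_eq_sub_of_le_right hle] at this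
    zify [hle] at this
    simp only [g, l]
    linarith
  have hsum := Finset.sum_le_sum fun i (_ : i ∈ univ) => hgap i
  simp only [sum_const, card_univ, Fintype.card_fin, nsmul_eq_mul, sum_add_distrib,
    sum_sub_distrib] at hsum
  have hspan : g (Fin.last k) - g 0 ≤ spanOf f := by
    have hle : f (y 0) ≤ f (y (Fin.last k)) := hy (Fin.zero_le _)
    have := dist_le_spanOf f (y (Fin.last k)) (y 0)
    rw [Nat.dist_eq_sub_of_le_right hle] at this
    zify [hle] at this
    exact this
  have hl_sum : ∑ i, l i = ∑ u, (ℓ u : ℤ) := Equiv.sum_comp y fun u => (ℓ u : ℤ)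
  have hg_succ := Fin.sum_univ_succ g
  have hg_castSucc := Fin.sum_univ_castSucc g
  have hl_succ := Fin.sum_univ_succ l
  have hl_castSucc := Fin.sum_univ_castSucc l
  have hl_first : 0 ≤ l 0 := Int.natCast_nonneg _
  have hl_last : 0 ≤ l (Fin.last k) := Int.natCast_nonneg _
  rw [hk]
  push_cast
  linarith

lemma isRadioLabelling_mul_equivFin (G : SimpleGraph α) :
    IsRadioLabelling G fun v => (G.diam + 1) * Fintype.equivFin α v := by
  intro u v huv
  have hpos : 0 < Nat.dist (Fintype.equivFin α u) (Fintype.equivFin α v) :=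
    Nat.dist_pos_of_ne (Fin.val_injective.ne ((Fintype.equivFin α).injective.ne huv))
  rw [Nat.dist_mul_left]
  have := Nat.le_mul_of_pos_right (G.diam + 1) hpos
  omega

lemma exists_isRadioLabelling_spanOf_eq_radioNumber (G : SimpleGraph α) :
    ∃ f, IsRadioLabelling G f ∧ spanOf f = radioNumber G := by
  have hne : {k | ∃ f : α → ℕ, IsRadioLabelling G f ∧ spanOf f = k}.Nonempty :=
    ⟨_, _, isRadioLabelling_mul_equivFin G, rfl⟩
  exact Nat.sInf_mem hne

end Span

section BoxProd

variable {α β : Type*} {G : SimpleGraph α} {H : SimpleGraph β}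

lemma dist_boxProd (hG : G.Preconnected) (hH : H.Preconnected) (x y : α × β) :
    (G □ H).dist x y = G.dist x.1 y.1 + H.dist x.2 y.2 := by
  rw [SimpleGraph.dist, edist_boxProd]
  exact ENat.toNat_add (edist_ne_top_iff_reachable.2 (hG _ _))
    (edist_ne_top_iff_reachable.2 (hH _ _))

lemma diam_add_diam_le_diam_boxProd [Finite α] [Finite β] [Nonempty α] [Nonempty β]
    (hG : G.Connected) (hH : H.Connected) : G.diam + H.diam ≤ (G □ H).diam := by
  obtain ⟨a, a', ha⟩ := G.exists_dist_eq_diam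
  obtain ⟨b, b', hb⟩ := H.exists_dist_eq_diam
  rw [← ha, ← hb, ← dist_boxProd hG.preconnected hH.preconnected (a, b) (a', b')]
  exact dist_le_diam (connected_iff_ediam_ne_top.1 (hG.boxProd hH))

lemma IsRadioLabelling.diam_add_one_le_of_boxProd [Fintype α] [Fintype β] (hG : G.Connected)
    (hH : H.Preconnected) {f : α × β → ℕ} (hf : IsRadioLabelling (G □ H) f)
    {x y : α × β} (hxy : x ≠ y) : G.diam + 1 ≤ Nat.dist (f x) (f y) + G.dist x.1 y.1 := by
  have : Nonempty α := ⟨x.1⟩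
  have : Nonempty β := ⟨x.2⟩
  have hH' : H.Connected := { preconnected := hH }
  have h1 := hf x y hxy
  have h2 := diam_add_diam_le_diam_boxProd hG hH'
  have h3 : H.dist x.2 y.2 ≤ H.diam := dist_le_diam (connected_iff_ediam_ne_top.1 hH')
  rw [dist_boxProd hG.preconnected hH] at h1
  omega

end BoxProd

section TreeDist

variable {α : Type*} {G : SimpleGraph α}

lemma eq_of_adj_of_dist_add_one_eq (hG : G.IsTree) {x a b c : α} (hab : G.Adj a b)
    (hcb : G.Adj c b) (ha : G.dist x a + 1 = G.dist x b) (hc : G.dist x c + 1 = G.dist x b) :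
    a = c := by
  classical
  obtain ⟨p, hp, -⟩ := hG.connected.exists_path_of_dist x b
  have parent : ∀ y, G.Adj y b → G.dist x y + 1 = G.dist x b → y = p.penultimate := by
    intro y hyb hy
    obtain ⟨q, hq, hql⟩ := hG.connected.exists_path_of_dist x y
    have hbq : b ∉ q.support := fun hb => by
      have := G.dist_le (q.takeUntil b hb)
      have := q.length_takeUntil_le_length hb
      omega
    exact hG.isAcyclic.eq_penultimate_of_adj_end hp hyb.symm
      (hG.isAcyclic.mem_support_of_ne_mem_support_of_adj_of_isPath hp hq hyb.symm hbq)
  rw [parent a hab ha, parent c hcb hc]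

lemma two_mul_dist_le (hG : G.IsTree) {a b c : α} (hab : G.Adj a b) (hbc : G.Adj b c)
    (hac : a ≠ c) (x : α) : 2 * G.dist x b ≤ G.dist x a + G.dist x c := by
  have h1 := hG.dist_eq_dist_add_one_of_adj x hab
  have h2 := hG.dist_eq_dist_add_one_of_adj x hbc
  by_contra hlt
  exact hac (eq_of_adj_of_dist_add_one_eq hG (x := x) hab hbc.symm (by omega) (by omega))

end TreeDist

section WeightCenters

variable {T : SimpleGraph V}

lemma two_mul_weight_add_two_le (hT : T.IsTree) {a b c : V} (hab : T.Adj a b)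
    (hbc : T.Adj b c) (hac : a ≠ c) : 2 * weight T b + 2 ≤ weight T a + weight T c := by
  classical
  -- the term `x = b` is where the convexity is strict
  have hb : 2 * T.dist b b + 2 ≤ T.dist b a + T.dist b c := by
    simp [dist_eq_one_iff_adj.2 hab.symm, dist_eq_one_iff_adj.2 hbc]
  have hrest := sum_le_sum fun x (_ : x ∈ univ.erase b) => two_mul_dist_le hT hab hbc hac x
  simp only [weight, mul_sum, ← sum_add_distrib]
  rw [← add_sum_erase _ _ (mem_univ b), ← add_sum_erase _ _ (mem_univ b)]
  omega

lemma weight_getVert_add_le (hT : T.IsTree) {u v : V} {p : T.Walk u v} (hp : p.IsPath)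
    (h01 : weight T u ≤ weight T (p.getVert 1)) :
    ∀ i < p.length, weight T (p.getVert i) + 2 * i ≤ weight T (p.getVert (i + 1))
  | 0, _ => by simpa using h01
  | i + 1, hi => by
    have ih := weight_getVert_add_le hT hp h01 i (by omega)
    have hne : p.getVert i ≠ p.getVert (i + 1 + 1) := fun h => by
      have := hp.getVert_injOn (by simp only [Set.mem_ofPred_eq]; omega)
        (by simp only [Set.mem_ofPred_eq]; omega) h
      omega
    have := two_mul_weight_add_two_le hT (p.adj_getVert_succ (by omega))
      (p.adj_getVert_succ hi) hne
    omega

lemma dist_le_one_of_mem_weightCenters (hT : T.IsTree) {u v : V}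
    (hu : u ∈ weightCenters T) (hv : v ∈ weightCenters T) : T.dist u v ≤ 1 := by
  obtain ⟨p, hp, hpl⟩ := hT.connected.exists_path_of_dist u v
  rcases Nat.eq_zero_or_pos p.length with h0 | hpos
  · omega
  have := weight_getVert_add_le hT hp (hu _) (p.length - 1) (by omega)
  rw [Nat.sub_add_cancel hpos, p.getVert_length] at this
  have := hv (p.getVert (p.length - 1))
  omega

lemma dist_add_epsilon_le_one (hT : T.IsTree) {u v : V} (hu : u ∈ weightCenters T)
    (hv : v ∈ weightCenters T) : T.dist u v + epsilon T ≤ 1 := by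
  unfold epsilon
  split_ifs with h
  · obtain ⟨c, hc⟩ := Set.ncard_eq_one.1 h
    rw [hc, Set.mem_singleton_iff] at hu hv
    simp [hu, hv]
  · simpa using dist_le_one_of_mem_weightCenters hT hu hv

lemma exists_mem_weightCenters_dist_eq_level [Nonempty V] (T : SimpleGraph V) (u : V) :
    ∃ c ∈ weightCenters T, T.dist u c = level T u := by
  obtain ⟨c, -, hmin⟩ := exists_min_image univ (weight T) univ_nonempty
  have hc : c ∈ weightCenters T := fun w => hmin w (mem_univ w)
  exact Nat.sInf_mem (Set.Nonempty.image _ ⟨c, hc⟩)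

lemma dist_add_epsilon_le (hT : T.IsTree) (u v : V) :
    T.dist u v + epsilon T ≤ level T u + level T v + 1 := by
  have := hT.connected.nonempty
  obtain ⟨cu, hcu, hu⟩ := exists_mem_weightCenters_dist_eq_level T u
  obtain ⟨cv, hcv, hv⟩ := exists_mem_weightCenters_dist_eq_level T v
  have h1 : T.dist u v ≤ T.dist u cu + T.dist cu v := hT.connected.dist_triangle
  have h2 : T.dist cu v ≤ T.dist cu cv + T.dist cv v := hT.connected.dist_triangle
  have := dist_add_epsilon_le_one hT hcu hcv
  rw [dist_comm (u := cv)] at h2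
  omega

end WeightCenters

theorem radioNumber_lower_bound_general {V : Type*} [Fintype V]
    (T : SimpleGraph V) (hT : T.IsTree) (m n : ℕ)
    (hm : Fintype.card V = m) :
    ((m * n : ℤ) - 1) * (T.diam + epsilon T) - 2 * n * totalLevel T ≤
      (radioNumber (T □ (⊤ : SimpleGraph (Fin n))) : ℤ) := by
  obtain ⟨f, hf, hspan⟩ :=
    exists_isRadioLabelling_spanOf_eq_radioNumber (T □ (⊤ : SimpleGraph (Fin n)))
  have hgap : ∀ u v, u ≠ v →
      T.diam + epsilon T ≤ Nat.dist (f u) (f v) + level T u.1 + level T v.1 := by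
    intro u v huv
    have := hf.diam_add_one_le_of_boxProd hT.connected preconnected_top huv
    have := dist_add_epsilon_le hT u.1 v.1
    omega
  have hlevels : ∑ u : V × Fin n, (level T u.1 : ℤ) = n * totalLevel T := by
    simp [Fintype.sum_prod_type, totalLevel, mul_sum]
  have := le_spanOf_of_le_dist f _ _ hgap
  rw [hlevels, Fintype.card_prod, Fintype.card_fin, hm, hspan] at this
  push_cast at this ⊢
  linarith

/-- lower bound `rn(T □ K_n) ≥ (mn − 1)(d + ε) − 2nL(T)`. -/
theorem radioNumber_lower_bound {V : Type*} [Fintype V]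
    (T : SimpleGraph V) (hT : T.IsTree) (m n : ℕ)
    (hm : Fintype.card V = m) (hd : 2 ≤ T.diam) (hn : 2 ≤ n) :
    ((m * n : ℤ) - 1) * (T.diam + epsilon T) - 2 * n * totalLevel T ≤
      (radioNumber (T □ (⊤ : SimpleGraph (Fin n))) : ℤ) :=
  radioNumber_lower_bound_general T hT m n hm

end RadioPaper
end

section
/- Let T be a tree of order m with diameter d ≥ 2 and |W(T)| = 1, let K_n be the complete graph on n ≥ 2 vertices, and let f be a radio labelling of T □ K_n inducing the ordering w_0, w_1, ..., w_{mn−1} of V(T □ K_n) with 0 = f(w_0) < f(w_1) < ... < f(w_{mn−1}) and w_t = (u_{i_t}, v_{j_t}). Then Σ_{t=0}^{mn−2} d(w_t, w_{t+1}) ≤ 2nL(T) + mn − 1. -/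
open SimpleGraph Finset

namespace RadioPaper

variable {V : Type*} [Fintype V]

/-! Route every step through the unique weight center `c`: in `T □ K_n`,
`d(w_t, w_{t+1}) ≤ d_T(u_t, c) + d_T(c, u_{t+1}) + 1 = L(u_t) + L(u_{t+1}) + 1`.
Summing over `t`, each level `L(u_t)` is counted at most twice, and each vertex of `T`
appears in exactly `n` vertices of `T □ K_n`. -/

theorem _root_.SimpleGraph.dist_boxProd_le {α β : Type*} (G : SimpleGraph α)
    (H : SimpleGraph β) (x y : α × β) :
    (G □ H).dist x y ≤ G.dist x.1 y.1 + H.dist x.2 y.2 := by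
  by_cases hxy : (G □ H).Reachable x y
  · obtain ⟨hG, hH⟩ := reachable_boxProd.mp hxy
    rw [SimpleGraph.dist, edist_boxProd, ENat.toNat_add (edist_ne_top_iff_reachable.mpr hG)
      (edist_ne_top_iff_reachable.mpr hH)]
    rfl
  · -- `dist` is `0` between unreachable vertices
    simp [dist_eq_zero_of_not_reachable hxy]

theorem _root_.SimpleGraph.dist_top_le_one {α : Type*} (a b : α) :
    (⊤ : SimpleGraph α).dist a b ≤ 1 := by
  classical
  rw [dist_top]
  split_ifs <;> simp

theorem _root_.Finset.sum_range_comp_eq_sum_of_bijOn {α M : Type*} [Fintype α] [AddCommMonoid M]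
    {w : ℕ → α} {N : ℕ} (hw : Set.BijOn w (Set.Iio N) Set.univ) (g : α → M) :
    ∑ t ∈ range N, g (w t) = ∑ p, g p :=
  sum_nbij w (by simp) (by simpa using hw.injOn) (by simpa using hw.surjOn) fun _ _ => rfl

theorem _root_.Finset.sum_range_pred_add_succ_le {M : Type*} [AddCommMonoid M] [PartialOrder M]
    [IsOrderedAddMonoid M] [CanonicallyOrderedAdd M] (a : ℕ → M) (N : ℕ) :
    ∑ t ∈ range (N - 1), (a t + a (t + 1)) ≤ 2 • ∑ t ∈ range N, a t := by
  rw [sum_add_distrib, two_nsmul]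
  refine add_le_add ?_ ?_
  · exact sum_le_sum_of_subset (range_subset_range.mpr (Nat.sub_le N 1))
  · rcases N with _ | N
    · simp
    · rw [sum_range_succ', Nat.add_sub_cancel]
      exact le_add_right le_rfl

theorem level_eq_dist_of_weightCenters_eq_singleton {G : SimpleGraph V} {c : V}
    (hc : weightCenters G = {c}) (u : V) : level G u = G.dist u c := by
  rw [level, hc, Set.image_singleton, csInf_singleton]

theorem dist_le_level_add_level {G : SimpleGraph V} (hG : G.Connected)
    (hW : (weightCenters G).ncard = 1) (u v : V) : G.dist u v ≤ level G u + level G v := by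
  obtain ⟨c, hc⟩ := Set.ncard_eq_one.mp hW
  rw [level_eq_dist_of_weightCenters_eq_singleton hc,
    level_eq_dist_of_weightCenters_eq_singleton hc, G.dist_comm (u := v)]
  exact hG.dist_triangle

theorem dist_boxProd_top_le_level_add_level {G : SimpleGraph V} (hG : G.Connected)
    (hW : (weightCenters G).ncard = 1) {β : Type*} (x y : V × β) :
    (G □ (⊤ : SimpleGraph β)).dist x y ≤ level G x.1 + level G y.1 + 1 :=
  (dist_boxProd_le G ⊤ x y).trans
    (add_le_add (dist_le_level_add_level hG hW x.1 y.1) (dist_top_le_one x.2 y.2))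

theorem sum_level_fst_eq (G : SimpleGraph V) (β : Type*) [Fintype β] :
    ∑ p : V × β, level G p.1 = Fintype.card β * totalLevel G := by
  simp [Fintype.sum_prod_type, totalLevel, mul_sum]

theorem sum_consecutive_dist_le_one_center_general {V : Type*} [Fintype V]
    (T : SimpleGraph V) (hT : T.IsTree) (m n : ℕ)
    (hW : (weightCenters T).ncard = 1)
    (w : ℕ → V × Fin n) (hw : Set.BijOn w (Set.Iio (m * n)) Set.univ) :
    ∑ t ∈ Finset.range (m * n - 1),
        (T □ (⊤ : SimpleGraph (Fin n))).dist (w t) (w (t + 1))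
      ≤ 2 * n * totalLevel T + (m * n - 1) := by
  set ℓ : V × Fin n → ℕ := fun p => level T p.1
  calc ∑ t ∈ range (m * n - 1), (T □ (⊤ : SimpleGraph (Fin n))).dist (w t) (w (t + 1))
      ≤ ∑ t ∈ range (m * n - 1), (ℓ (w t) + ℓ (w (t + 1)) + 1) :=
        sum_le_sum fun t _ => dist_boxProd_top_le_level_add_level hT.connected hW _ _
    _ = ∑ t ∈ range (m * n - 1), (ℓ (w t) + ℓ (w (t + 1))) + (m * n - 1) := by
        rw [sum_add_distrib, sum_const, card_range, smul_eq_mul, mul_one]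
    _ ≤ 2 * ∑ t ∈ range (m * n), ℓ (w t) + (m * n - 1) := by
        gcongr
        exact sum_range_pred_add_succ_le _ _
    _ = 2 * n * totalLevel T + (m * n - 1) := by
        rw [sum_range_comp_eq_sum_of_bijOn hw, sum_level_fst_eq, Fintype.card_fin, mul_assoc]

/-- Case 1 in the proof of Theorem 3.1: for a tree `T` with one weight
center, any radio labelling `f` of `T □ K_n`, inducing the ordering
`w_0, w_1, …, w_{mn−1}` by increasing labels with `f(w_0) = 0`, satisfies
`Σ_{t=0}^{mn−2} d(w_t, w_{t+1}) ≤ 2nL(T) + mn − 1`. -/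
theorem sum_consecutive_dist_le_one_center {V : Type*} [Fintype V]
    (T : SimpleGraph V) (hT : T.IsTree) (m n : ℕ)
    (hm : Fintype.card V = m) (hd : 2 ≤ T.diam) (hn : 2 ≤ n)
    (hW : (weightCenters T).ncard = 1)
    (f : V × Fin n → ℕ)
    (hf : IsRadioLabelling (T □ (⊤ : SimpleGraph (Fin n))) f)
    (w : ℕ → V × Fin n) (hw : Set.BijOn w (Set.Iio (m * n)) Set.univ)
    (h0 : f (w 0) = 0)
    (hmono : ∀ s t, s < t → t < m * n → f (w s) < f (w t)) :
    ∑ t ∈ Finset.range (m * n - 1),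
        (T □ (⊤ : SimpleGraph (Fin n))).dist (w t) (w (t + 1))
      ≤ 2 * n * totalLevel T + (m * n - 1) :=
  sum_consecutive_dist_le_one_center_general T hT m n hW w hw

end RadioPaper
end

section
/- Let T be a tree of order m with diameter d ≥ 2 and |W(T)| = 2, let K_n be the complete graph on n ≥ 2 vertices, and let f be a radio labelling of T □ K_n inducing the ordering w_0, w_1, ..., w_{mn−1} of V(T □ K_n) with 0 = f(w_0) < f(w_1) < ... < f(w_{mn−1}) and w_t = (u_{i_t}, v_{j_t}). Then Σ_{t=0}^{mn−2} d(w_t, w_{t+1}) ≤ 2nL(T) + 2(mn − 1). -/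
/-!
In `T □ K_n` one has `d((u,i),(v,j)) ≤ d_T(u,v) + 1`. In a tree the distance from a fixed vertex,
and hence the weight, is midpoint convex along paths, so every vertex on the path between two
weight centers is again a weight center; with exactly two centers they are therefore adjacent, and
`d_T(u,v) ≤ L(u) + L(v) + 1`. Summing over consecutive pairs of the ordering counts every level
at most twice, each vertex of `T` appearing `n` times.
-/

open SimpleGraph Finset

namespace SimpleGraph

variable {V : Type*} {T : SimpleGraph V}

lemma dist_boxProd_le_s19 {α β : Type*} (G : SimpleGraph α) (H : SimpleGraph β) (x y : α × β) :
    (G □ H).dist x y ≤ G.dist x.1 y.1 + H.dist x.2 y.2 := by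
  rw [dist, dist, dist, edist_boxProd]
  by_cases hG : G.edist x.1 y.1 = ⊤
  · simp [hG]
  by_cases hH : H.edist x.2 y.2 = ⊤
  · simp [hH]
  rw [ENat.toNat_add hG hH]

lemma dist_top_le_one_s19 {α : Type*} (u v : α) : (⊤ : SimpleGraph α).dist u v ≤ 1 := by
  classical
  rw [dist_top]
  split_ifs <;> simp

lemma IsTree.eq_penultimate_of_adj_of_dist_eq (hT : T.IsTree) {v y z : V} {p : T.Walk v y}
    (hp : p.IsPath) (hyz : T.Adj y z) (hd : T.dist v y = T.dist v z + 1) :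
    z = p.penultimate := by
  classical
  refine hT.isAcyclic.eq_penultimate_of_adj_end hp hyz ?_
  -- otherwise `y` would lie on a shortest path from `v` to the closer vertex `z`
  by_contra hz
  obtain ⟨q, hq, hql⟩ := hT.connected.exists_path_of_dist v z
  have hy := hT.isAcyclic.mem_support_of_ne_mem_support_of_adj_of_isPath hq hp hyz.symm hz
  have := (dist_le (q.takeUntil y hy)).trans (q.length_takeUntil_le_length hy)
  omega

lemma IsTree.two_mul_dist_le_add_dist (hT : T.IsTree) (v : V) {y z₁ z₂ : V}
    (h₁ : T.Adj y z₁) (h₂ : T.Adj y z₂) (hne : z₁ ≠ z₂) :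
    2 * T.dist v y ≤ T.dist v z₁ + T.dist v z₂ := by
  obtain ⟨p, hp, -⟩ := hT.connected.exists_path_of_dist v y
  rcases hT.dist_eq_dist_add_one_of_adj v h₁ with hd₁ | hd₁ <;>
    rcases hT.dist_eq_dist_add_one_of_adj v h₂ with hd₂ | hd₂
  · exact absurd ((hT.eq_penultimate_of_adj_of_dist_eq hp h₁ hd₁).trans
      (hT.eq_penultimate_of_adj_of_dist_eq hp h₂ hd₂).symm) hne
  all_goals omega

end SimpleGraph

lemma Nat.monotoneOn_Iic_of_two_mul_le_add {f : ℕ → ℕ} {k : ℕ}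
    (hconv : ∀ i, i + 2 ≤ k → 2 * f (i + 1) ≤ f i + f (i + 2)) (h01 : f 0 ≤ f 1) :
    MonotoneOn f (Set.Iic k) := by
  have step : ∀ i, i + 1 ≤ k → f i ≤ f (i + 1) := by
    intro i
    induction i with
    | zero => exact fun _ => h01
    | succ i ih =>
      intro hi
      have := hconv i hi
      have := ih (by omega)
      simp only [add_assoc, Nat.reduceAdd] at *
      omega
  refine monotoneOn_of_le_succ Set.ordConnected_Iic fun i _ _ hi => ?_
  simpa using step i (by simpa using hi)

lemma Finset.sum_range_pred_add_succ_le_s19 (g : ℕ → ℕ) (N : ℕ) :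
    ∑ t ∈ range (N - 1), (g t + g (t + 1)) ≤ 2 * ∑ t ∈ range N, g t := by
  rcases N with _ | N
  · simp
  rw [Nat.add_sub_cancel, sum_add_distrib, two_mul]
  gcongr ?_ + ?_
  · exact sum_le_sum_of_subset (range_subset_range.mpr N.le_succ)
  · rw [sum_range_succ' g]
    exact Nat.le_add_right _ _

lemma Set.BijOn.sum_range_comp {α : Type*} [Fintype α] {w : ℕ → α} {N : ℕ}
    (hw : Set.BijOn w (Set.Iio N) Set.univ) (g : α → ℕ) :
    ∑ t ∈ Finset.range N, g (w t) = ∑ a, g a :=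
  Finset.sum_nbij w (fun _ _ => Finset.mem_univ _) (by simpa using hw.injOn)
    (by simpa using hw.surjOn) fun _ _ => rfl

namespace RadioPaper

variable {V : Type*} [Fintype V] {T : SimpleGraph V}

lemma two_mul_weight_le_add_weight (hT : T.IsTree) {y z₁ z₂ : V}
    (h₁ : T.Adj y z₁) (h₂ : T.Adj y z₂) (hne : z₁ ≠ z₂) :
    2 * weight T y ≤ weight T z₁ + weight T z₂ := by
  simp only [weight, mul_sum, ← sum_add_distrib]
  exact sum_le_sum fun v _ => hT.two_mul_dist_le_add_dist v h₁ h₂ hne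

lemma getVert_mem_weightCenters (hT : T.IsTree) {a b : V} {p : T.Walk a b} (hp : p.IsPath)
    (ha : a ∈ weightCenters T) (hb : b ∈ weightCenters T) {i : ℕ} (hi : i ≤ p.length) :
    p.getVert i ∈ weightCenters T := by
  have hmono : MonotoneOn (fun i => weight T (p.getVert i)) (Set.Iic p.length) := by
    refine Nat.monotoneOn_Iic_of_two_mul_le_add (fun j hj => ?_) (by simpa using ha _)
    refine two_mul_weight_le_add_weight hT (p.adj_getVert_succ (by omega)).symm
      (p.adj_getVert_succ (by omega)) fun h => ?_
    have := hp.getVert_injOn (by rw [Set.mem_ofPred_eq]; omega)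
      (by rw [Set.mem_ofPred_eq]; omega) h
    omega
  intro u
  calc weight T (p.getVert i) ≤ weight T (p.getVert p.length) :=
        hmono (Set.mem_Iic.mpr hi) (Set.mem_Iic.mpr le_rfl) hi
    _ = weight T b := by rw [p.getVert_length]
    _ ≤ weight T u := hb u

lemma dist_le_one_of_mem_weightCenters_s19 (hT : T.IsTree) (hW : (weightCenters T).ncard = 2)
    {c c' : V} (hc : c ∈ weightCenters T) (hc' : c' ∈ weightCenters T) : T.dist c c' ≤ 1 := by
  by_contra! h
  obtain ⟨p, hp, hpl⟩ := hT.connected.exists_path_of_dist c c'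
  have hx := getVert_mem_weightCenters hT hp hc hc' (i := 1) (by omega)
  have hxc : p.getVert 1 ≠ c := by rw [Ne, hp.getVert_eq_start_iff (by omega)]; omega
  have hxc' : p.getVert 1 ≠ c' := by rw [Ne, hp.getVert_eq_end_iff (by omega)]; omega
  have hcc' : c ≠ c' := by rintro rfl; simp at h
  have h3 : ({c, c', p.getVert 1} : Set V).ncard = 3 :=
    Set.ncard_eq_three.mpr ⟨c, c', _, hcc', hxc.symm, hxc'.symm, rfl⟩
  have := Set.ncard_le_ncard (Set.insert_subset hc (Set.insert_subset hc'
    (Set.singleton_subset_iff.mpr hx)))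
  omega

lemma exists_mem_weightCenters_level_eq (hW : (weightCenters T).Nonempty) (u : V) :
    ∃ c ∈ weightCenters T, level T u = T.dist u c := by
  obtain ⟨c, hc, hcu⟩ := Nat.sInf_mem (hW.image fun x => T.dist u x)
  exact ⟨c, hc, hcu.symm⟩

lemma dist_le_level_add_level_add_one (hT : T.IsTree) (hW : (weightCenters T).ncard = 2)
    (u v : V) : T.dist u v ≤ level T u + level T v + 1 := by
  have hne : (weightCenters T).Nonempty := Set.nonempty_of_ncard_ne_zero (by omega)
  obtain ⟨c, hc, hu⟩ := exists_mem_weightCenters_level_eq hne u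
  obtain ⟨c', hc', hv⟩ := exists_mem_weightCenters_level_eq hne v
  calc T.dist u v ≤ T.dist u c + T.dist c c' + T.dist c' v :=
        (hT.connected.dist_triangle).trans (add_le_add_left hT.connected.dist_triangle _)
    _ ≤ level T u + level T v + 1 := by
        rw [hu, hv, dist_comm (u := c')]
        have := dist_le_one_of_mem_weightCenters_s19 hT hW hc hc'
        omega

lemma sum_level_fst (n : ℕ) :
    ∑ p : V × Fin n, level T p.1 = n * totalLevel T := by
  simp [Fintype.sum_prod_type, totalLevel, mul_sum]

lemma dist_boxProd_top_le_level_add_level_s19 (hT : T.IsTree) (hW : (weightCenters T).ncard = 2)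
    {n : ℕ} (p q : V × Fin n) :
    (T □ (⊤ : SimpleGraph (Fin n))).dist p q ≤ level T p.1 + level T q.1 + 2 := by
  have := dist_boxProd_le_s19 T ⊤ p q
  have := dist_top_le_one_s19 p.2 q.2
  have := dist_le_level_add_level_add_one hT hW p.1 q.1
  omega

theorem sum_consecutive_dist_le_two_centers_general {V : Type*} [Fintype V]
    (T : SimpleGraph V) (hT : T.IsTree) (m n : ℕ)
    (hW : (weightCenters T).ncard = 2)
    (w : ℕ → V × Fin n) (hw : Set.BijOn w (Set.Iio (m * n)) Set.univ) :
    ∑ t ∈ Finset.range (m * n - 1),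
        (T □ (⊤ : SimpleGraph (Fin n))).dist (w t) (w (t + 1))
      ≤ 2 * n * totalLevel T + 2 * (m * n - 1) := by
  calc ∑ t ∈ range (m * n - 1), (T □ (⊤ : SimpleGraph (Fin n))).dist (w t) (w (t + 1))
      ≤ ∑ t ∈ range (m * n - 1), (level T (w t).1 + level T (w (t + 1)).1 + 2) :=
        sum_le_sum fun t _ => dist_boxProd_top_le_level_add_level_s19 hT hW (w t) (w (t + 1))
    _ = ∑ t ∈ range (m * n - 1), (level T (w t).1 + level T (w (t + 1)).1)
          + 2 * (m * n - 1) := by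
        rw [sum_add_distrib, sum_const, card_range, smul_eq_mul, mul_comm _ 2]
    _ ≤ 2 * ∑ t ∈ range (m * n), level T (w t).1 + 2 * (m * n - 1) := by
        gcongr
        exact sum_range_pred_add_succ_le_s19 (fun t => level T (w t).1) _
    _ = 2 * n * totalLevel T + 2 * (m * n - 1) := by
        rw [hw.sum_range_comp fun p => level T p.1, sum_level_fst, mul_assoc]

/-- Case 2 in the proof of Theorem 3.1: for a tree `T` with two weight
centers, any radio labelling `f` of `T □ K_n`, inducing the ordering
`w_0, w_1, …, w_{mn−1}` by increasing labels with `f(w_0) = 0`, satisfies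
`Σ_{t=0}^{mn−2} d(w_t, w_{t+1}) ≤ 2nL(T) + 2(mn − 1)`. -/
theorem sum_consecutive_dist_le_two_centers {V : Type*} [Fintype V]
    (T : SimpleGraph V) (hT : T.IsTree) (m n : ℕ)
    (hm : Fintype.card V = m) (hd : 2 ≤ T.diam) (hn : 2 ≤ n)
    (hW : (weightCenters T).ncard = 2)
    (f : V × Fin n → ℕ)
    (hf : IsRadioLabelling (T □ (⊤ : SimpleGraph (Fin n))) f)
    (w : ℕ → V × Fin n) (hw : Set.BijOn w (Set.Iio (m * n)) Set.univ)
    (h0 : f (w 0) = 0)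
    (hmono : ∀ s t, s < t → t < m * n → f (w s) < f (w t)) :
    ∑ t ∈ Finset.range (m * n - 1),
        (T □ (⊤ : SimpleGraph (Fin n))).dist (w t) (w (t + 1))
      ≤ 2 * n * totalLevel T + 2 * (m * n - 1) :=
  sum_consecutive_dist_le_two_centers_general T hT m n hW w hw

end RadioPaper
end
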